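/- Let q ≥ 2, let μ = p^ℕ be a Bernoulli measure on Ω = {0,…,q−1}^ℕ with all entries of the probability vector p positive, let c: {0,…,q−1} → S¹ be a map into the unit circle, and let g: Ω → ℂ be a measurable function with |g(ω)| = 1 μ-a.e. such that g(σ(ω)) = c(ω₀)·g(ω) for μ-a.e. ω, where σ is the shift. Then g is constant μ-almost surely, and consequently c(i) = 1 for every i ∈ {0,…,q−1}. -/

import Mathlib

open MeasureTheory Filter Topology Set
open scoped ENNReal

noncomputable section

abbrev Torus := UnitAddCircle

/-- The natural projection `ℝ → ℝ/ℤ`. -/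
def toTorus (x : ℝ) : Torus := (x : Torus)

/-- One-sided sequence space on `q` symbols. -/
abbrev Word (q : ℕ) := ℕ → Fin q

/-- The left shift. -/
def shift {q : ℕ} : Word q → Word q := fun ω n => ω (n + 1)

/-- `μ` is the Bernoulli measure `pvec^ℕ`. -/
def IsBernoulli {q : ℕ} (pvec : Fin q → ℝ) (μ : Measure (Word q)) : Prop :=
  IsProbabilityMeasure μ ∧
  ∀ (n : ℕ) (w : Fin n → Fin q),
    μ {ω | ∀ i : Fin n, ω (i : ℕ) = w i} = ∏ i, ENNReal.ofReal (pvec (w i))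

/-- The skew product `T(ω,x) = (σω, x + α(ω₀))`. -/
def skew {q : ℕ} (α : Fin q → Torus) : Word q × Torus → Word q × Torus :=
  fun z => (shift z.1, z.2 + α (z.1 0))

/-- `e(s) = exp(2πis)`. -/
def eC (s : ℝ) : ℂ := Complex.exp (2 * Real.pi * s * Complex.I)

/-!
Iterating the cocycle equation gives `g = (∏_{k<n} c(ω_k))⁻¹ · g ∘ σⁿ`. Since `σⁿ` pushes `μ`
restricted to a cylinder `[w]` of length `n` forward to `μ([w]) • μ`, the conditional
expectation of `g` given the first `n` letters is `(∏_{k<n} c(ω_k))⁻¹ ∫ g`. These functions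
have modulus `‖∫ g‖` and converge a.e. to `g` by Lévy's upward theorem, so `‖∫ g‖ = 1`; by
strict convexity of `ℂ`, a function of modulus one whose mean has modulus one is a.e. equal to
its mean. Then `c(ω₀) = 1` a.e., and each cylinder `{ω₀ = i}` has positive measure.
-/

open Finset in
theorem MeasureTheory.Measure.QuasiMeasurePreserving.ae_comp_iterate_eq_prod_mul
    {α M : Type*} [MeasurableSpace α] [CommMonoid M] {μ : Measure α} {f : α → α}
    (hf : QuasiMeasurePreserving f μ μ) {g φ : α → M} (h : ∀ᵐ x ∂μ, g (f x) = φ x * g x)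
    (n : ℕ) : ∀ᵐ x ∂μ, g (f^[n] x) = (∏ k ∈ range n, φ (f^[k] x)) * g x := by
  induction n with
  | zero => simp
  | succ n ih =>
    filter_upwards [ih, (hf.iterate n).ae h] with x hx hfx
    rw [Function.iterate_succ_apply', hfx, hx, prod_range_succ, mul_comm _ (φ _), mul_assoc]

theorem MeasureTheory.Integrable.tendsto_ae_condExp_complex {Ω : Type*} {m0 : MeasurableSpace Ω}
    {μ : Measure Ω} [IsFiniteMeasure μ] {ℱ : Filtration ℕ m0} {g : Ω → ℂ}
    (hg : Integrable g μ) (hgm : StronglyMeasurable[⨆ n, ℱ n] g) :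
    ∀ᵐ x ∂μ, Tendsto (fun n => μ[g | ℱ n] x) atTop (𝓝 (g x)) := by
  have hpart : ∀ L : ℂ →L[ℝ] ℝ,
      ∀ᵐ x ∂μ, Tendsto (fun n => L (μ[g | ℱ n] x)) atTop (𝓝 (L (g x))) := by
    intro L
    filter_upwards [(L.integrable_comp hg).tendsto_ae_condExp
        (L.continuous.comp_stronglyMeasurable hgm),
      ae_all_iff.2 fun n => L.comp_condExp_comm (m := ℱ n) hg] with x hx hL
    exact hx.congr fun n => (hL n).symm
  filter_upwards [hpart Complex.reCLM, hpart Complex.imCLM] with x hre him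
  simpa using ((Complex.continuous_ofReal.tendsto _).comp hre).add
    (((Complex.continuous_ofReal.tendsto _).comp him).mul_const Complex.I)

theorem MeasureTheory.comp_ae_eq_condExp_comap {Ω α E : Type*} {m0 : MeasurableSpace Ω}
    {μ : Measure Ω} [IsFiniteMeasure μ] [NormedAddCommGroup E] [NormedSpace ℝ E]
    [CompleteSpace E] [Fintype α] [MeasurableSpace α] [MeasurableSingletonClass α]
    {f : Ω → α} (hf : Measurable f) {u : Ω → E} (hu : Integrable u μ) (H : α → E)
    (hH : ∀ a, ∫ x in f ⁻¹' {a}, u x ∂μ = μ.real (f ⁻¹' {a}) • H a) :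
    H ∘ f =ᵐ[μ] μ[u | MeasurableSpace.comap f ‹_›] := by
  classical
  have hHm : StronglyMeasurable[MeasurableSpace.comap f ‹_›] (H ∘ f) :=
    StronglyMeasurable.of_discrete.comp_measurable (comap_measurable f)
  have hHi : Integrable (H ∘ f) μ :=
    .of_bound (hHm.mono hf.comap_le).aestronglyMeasurable (∑ a, ‖H a‖)
      (.of_forall fun x => Finset.single_le_sum (f := fun a => ‖H a‖)
        (fun a _ => norm_nonneg _) (Finset.mem_univ (f x)))
  refine ae_eq_condExp_of_forall_setIntegral_eq hf.comap_le hu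
    (fun s _ _ => hHi.integrableOn) (fun s hs _ => ?_) hHm.aestronglyMeasurable
  obtain ⟨S, -, rfl⟩ := hs
  have hdisj := Set.pairwiseDisjoint_fiber f (S.toFinset : Set α)
  have hfib : ∀ a ∈ S.toFinset, MeasurableSet (f ⁻¹' {a}) :=
    fun a _ => hf (measurableSet_singleton a)
  rw [← Set.biUnion_preimage_singleton, ← Set.coe_toFinset S, Finset.set_biUnion_coe,
    integral_biUnion_finset _ hfib hdisj fun a _ => hHi.integrableOn,
    integral_biUnion_finset _ hfib hdisj fun a _ => hu.integrableOn]
  refine Finset.sum_congr rfl fun a _ => ?_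
  rw [hH a, setIntegral_congr_fun (f := H ∘ f) (g := fun _ => H a)
    (hf (measurableSet_singleton a)) (fun x (hx : f x = a) => congrArg H hx), setIntegral_const]

namespace Word

variable {q : ℕ}

def take (n : ℕ) (ω : Word q) : Fin n → Fin q := fun i => ω i

theorem measurable_take (n : ℕ) : Measurable (take n : Word q → Fin n → Fin q) :=
  measurable_pi_lambda _ fun _ => measurable_pi_apply _

theorem measurable_shift : Measurable (shift : Word q → Word q) :=
  measurable_pi_lambda _ fun n => measurable_pi_apply (n + 1)

theorem shift_iterate_apply (n : ℕ) (ω : Word q) (k : ℕ) : shift^[n] ω k = ω (k + n) := by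
  induction n generalizing ω with
  | zero => rfl
  | succ n ih => rw [Function.iterate_succ_apply, ih]; rfl

theorem preimage_take_append {n m : ℕ} (w : Fin n → Fin q) (v : Fin m → Fin q) :
    take (n + m) ⁻¹' {Fin.append w v} = take n ⁻¹' {w} ∩ shift^[n] ⁻¹' (take m ⁻¹' {v}) := by
  ext ω
  simp only [Set.mem_preimage, Set.mem_singleton_iff, Set.mem_inter_iff, funext_iff,
    Fin.forall_fin_add, Fin.append_left, Fin.append_right, take, shift_iterate_apply,
    Fin.val_castAdd, Fin.val_natAdd, add_comm]

theorem measurable_take_comap_take {n m : ℕ} (h : n ≤ m) :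
    Measurable[MeasurableSpace.comap (take m) MeasurableSpace.pi] (take n : Word q → _) :=
  (measurable_pi_lambda _ fun i => measurable_pi_apply (Fin.castLE h i)).comp
    (comap_measurable (take m))

/-- The filtration of the coordinates `ω 0, …, ω (n - 1)`. -/
def filtration (q : ℕ) : Filtration ℕ (MeasurableSpace.pi : MeasurableSpace (Word q)) where
  seq n := MeasurableSpace.comap (take n) MeasurableSpace.pi
  mono' _ _ h := (measurable_take_comap_take h).comap_le
  le' n := (measurable_take n).comap_le

theorem iSup_filtration : ⨆ n, filtration q n = MeasurableSpace.pi :=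
  le_antisymm (iSup_le (filtration q).le) <| iSup_le fun i =>
    ((measurable_pi_apply (Fin.last i)).comp (comap_measurable (take (i + 1)))).comap_le.trans
      (le_iSup (fun n => (filtration q n : MeasurableSpace (Word q))) (i + 1))

theorem ext_of_take {μ ν : Measure (Word q)} [IsFiniteMeasure μ]
    (h : ∀ n (w : Fin n → Fin q), μ (take n ⁻¹' {w}) = ν (take n ⁻¹' {w})) : μ = ν := by
  classical
  have hcomap : ∀ n (S : Set (Fin n → Fin q)), μ (take n ⁻¹' S) = ν (take n ⁻¹' S) := by
    intro n S
    have hfib : ∀ w ∈ S.toFinset, MeasurableSet (take n ⁻¹' {w}) :=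
      fun w _ => measurable_take n (measurableSet_singleton w)
    rw [← Set.coe_toFinset S, ← sum_measure_preimage_singleton _ hfib,
      ← sum_measure_preimage_singleton _ hfib]
    exact Finset.sum_congr rfl fun w _ => h n w
  refine ext_of_generate_finite (⋃ n, {s | MeasurableSet[filtration q n] s})
    ((MeasurableSpace.generateFrom_iUnion_measurableSet _).trans iSup_filtration).symm
    (isPiSystem_iUnion_of_monotone _
      (fun n => @MeasurableSpace.isPiSystem_measurableSet _ (filtration q n))
      fun n m hnm s (hs : MeasurableSet[filtration q n] s) => (filtration q).mono hnm s hs)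
    ?_ (by simpa using hcomap 0 Set.univ)
  simp only [Set.mem_iUnion]
  rintro s ⟨n, S, -, rfl⟩
  exact hcomap n S

end Word

namespace IsBernoulli

open Word

variable {q : ℕ} {pvec : Fin q → ℝ} {μ : Measure (Word q)}

theorem measure_preimage_take (hB : IsBernoulli pvec μ) (n : ℕ) (w : Fin n → Fin q) :
    μ (take n ⁻¹' {w}) = ∏ i, ENNReal.ofReal (pvec (w i)) := by
  rw [← hB.2 n w]
  congr 1
  ext ω
  simp [take, funext_iff]

theorem measure_preimage_take_ne_zero (hB : IsBernoulli pvec μ) (hpos : ∀ i, 0 < pvec i)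
    (n : ℕ) (w : Fin n → Fin q) : μ (take n ⁻¹' {w}) ≠ 0 := by
  rw [hB.measure_preimage_take]
  exact Finset.prod_ne_zero_iff.2 fun i _ => (ENNReal.ofReal_pos.2 (hpos _)).ne'

theorem map_restrict_preimage_take (hB : IsBernoulli pvec μ) (n : ℕ) (w : Fin n → Fin q) :
    (μ.restrict (take n ⁻¹' {w})).map shift^[n] = μ (take n ⁻¹' {w}) • μ := by
  have := hB.1
  refine ext_of_take fun m v => ?_
  have hv := measurable_take m (measurableSet_singleton v)
  rw [Measure.map_apply (measurable_shift.iterate n) hv,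
    Measure.restrict_apply (measurable_shift.iterate n hv), Set.inter_comm,
    ← preimage_take_append, Measure.smul_apply, smul_eq_mul, hB.measure_preimage_take,
    hB.measure_preimage_take, hB.measure_preimage_take, Fin.prod_univ_add]
  simp only [Fin.append_left, Fin.append_right]

theorem measurePreserving_shift (hB : IsBernoulli pvec μ) : MeasurePreserving shift μ μ := by
  have := hB.1
  refine ⟨measurable_shift, Measure.ext fun A hA => ?_⟩
  have hfib : ∀ w ∈ (Finset.univ : Finset (Fin 1 → Fin q)), MeasurableSet (take 1 ⁻¹' {w}) :=
    fun w _ => measurable_take 1 (measurableSet_singleton w)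
  have hfactor (w) :
      μ.restrict (shift ⁻¹' A) (take 1 ⁻¹' {w}) = μ (take 1 ⁻¹' {w}) * μ A := by
    rw [← smul_eq_mul, ← Measure.smul_apply, ← hB.map_restrict_preimage_take,
      Measure.map_apply (measurable_shift.iterate 1) hA,
      Measure.restrict_apply (hfib w (Finset.mem_univ w)),
      Measure.restrict_apply (measurable_shift.iterate 1 hA), Set.inter_comm, Function.iterate_one]
  calc μ.map shift A
      = μ.restrict (shift ⁻¹' A) (take 1 ⁻¹' ↑(Finset.univ : Finset (Fin 1 → Fin q))) := by
        rw [Measure.map_apply measurable_shift hA, Finset.coe_univ, Set.preimage_univ,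
          Measure.restrict_apply_univ]
    _ = ∑ w, μ (take 1 ⁻¹' {w}) * μ A := by
        rw [← sum_measure_preimage_singleton _ hfib]
        exact Finset.sum_congr rfl fun w _ => hfactor w
    _ = μ A := by
        rw [← Finset.sum_mul, sum_measure_preimage_singleton _ hfib, Finset.coe_univ,
          Set.preimage_univ, measure_univ, one_mul]

theorem setIntegral_preimage_take (hB : IsBernoulli pvec μ) {c : Fin q → ℂ} (hc : ∀ i, c i ≠ 0)
    {g : Word q → ℂ} (hg : Measurable g) (hcoc : ∀ᵐ ω ∂μ, g (shift ω) = c (ω 0) * g ω)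
    (n : ℕ) (w : Fin n → Fin q) :
    ∫ ω in take n ⁻¹' {w}, g ω ∂μ =
      μ.real (take n ⁻¹' {w}) • ((∏ k, c (w k))⁻¹ * ∫ ω, g ω ∂μ) := by
  have hiter :=
    hB.measurePreserving_shift.quasiMeasurePreserving.ae_comp_iterate_eq_prod_mul hcoc n
  have hae :
      ∀ᵐ ω ∂μ.restrict (take n ⁻¹' {w}), g ω = (∏ k, c (w k))⁻¹ * g (shift^[n] ω) := by
    filter_upwards [ae_restrict_of_ae hiter,
      ae_restrict_mem (measurable_take n (measurableSet_singleton w))] with ω h hω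
    have hprod : ∏ k ∈ Finset.range n, c (shift^[k] ω 0) = ∏ k, c (w k) := by
      rw [← (Set.mem_singleton_iff.1 hω)]
      simp [take, shift_iterate_apply, ← Fin.prod_univ_eq_prod_range (fun k => c (ω k))]
    rw [h, hprod, inv_mul_cancel_left₀ (Finset.prod_ne_zero_iff.2 fun k _ => hc _)]
  rw [integral_congr_ae hae, integral_const_mul, ← integral_map
    (measurable_shift.iterate n).aemeasurable hg.aestronglyMeasurable,
    hB.map_restrict_preimage_take, integral_smul_measure, mul_smul_comm]
  rfl

theorem tendsto_inv_prod_mul_integral (hB : IsBernoulli pvec μ) {c : Fin q → ℂ}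
    (hc : ∀ i, c i ≠ 0) {g : Word q → ℂ} (hg : Measurable g) (hgi : Integrable g μ)
    (hcoc : ∀ᵐ ω ∂μ, g (shift ω) = c (ω 0) * g ω) :
    ∀ᵐ ω ∂μ, Tendsto (fun n => (∏ k : Fin n, c (ω k))⁻¹ * ∫ ω, g ω ∂μ) atTop (𝓝 (g ω)) := by
  have := hB.1
  have hgm : StronglyMeasurable[⨆ n, filtration q n] g := by
    rw [iSup_filtration]
    exact hg.stronglyMeasurable
  filter_upwards [hgi.tendsto_ae_condExp_complex hgm, ae_all_iff.2 fun n =>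
    comp_ae_eq_condExp_comap (measurable_take n) hgi _
      (hB.setIntegral_preimage_take hc hg hcoc n)] with ω hω hn
  exact hω.congr fun n => (hn n).symm

end IsBernoulli

theorem statement8_general (q : ℕ)
    (pvec : Fin q → ℝ) (hpos : ∀ i, 0 < pvec i)
    (μ : Measure (Word q)) (hBern : IsBernoulli pvec μ)
    (c : Fin q → ℂ) (hc : ∀ i, ‖c i‖ = 1)
    (g : Word q → ℂ) (hgmeas : Measurable g)
    (hgmod : ∀ᵐ ω ∂μ, ‖g ω‖ = 1)
    (hcocycle : ∀ᵐ ω ∂μ, g (shift ω) = c (ω 0) * g ω) :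
    (∃ z : ℂ, ∀ᵐ ω ∂μ, g ω = z) ∧ ∀ i, c i = 1 := by
  have := hBern.1
  have hgint : Integrable g μ :=
    .of_bound hgmeas.aestronglyMeasurable 1 (hgmod.mono fun _ h => h.le)
  have hconv := hBern.tendsto_inv_prod_mul_integral
    (fun i => norm_ne_zero_iff.1 (by rw [hc]; exact one_ne_zero)) hgmeas hgint hcocycle
  set I := ∫ ω, g ω ∂μ
  have hI : ‖I‖ = 1 := by
    obtain ⟨ω, hω, hgω⟩ := (hconv.and hgmod).exists
    have hnorm (n : ℕ) : ‖(∏ k : Fin n, c (ω k))⁻¹ * I‖ = ‖I‖ := by simp [norm_prod, hc]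
    rw [← hgω, ← tendsto_const_nhds_iff (l := (atTop : Filter ℕ))]
    simpa only [hnorm] using hω.norm
  have hconst : ∀ᵐ ω ∂μ, g ω = I := by
    have := ae_eq_const_or_norm_average_lt_of_norm_le_const (hgmod.mono fun _ h => h.le)
    rw [average_eq_integral, hI] at this
    exact this.resolve_right (lt_irrefl 1)
  have hc1 : ∀ᵐ ω ∂μ, c (ω 0) = 1 := by
    filter_upwards [hcocycle, hconst,
      hBern.measurePreserving_shift.quasiMeasurePreserving.ae hconst] with ω h h0 h1
    rw [h0, h1] at h
    exact (mul_eq_right₀ (norm_ne_zero_iff.1 (hI.trans_ne one_ne_zero))).1 h.symm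
  refine ⟨⟨I, hconst⟩, fun i => ?_⟩
  obtain ⟨ω, hω, hω1⟩ := Measure.exists_mem_of_measure_ne_zero_of_ae
    (hBern.measure_preimage_take_ne_zero hpos 1 fun _ => i) (ae_restrict_of_ae hc1)
  rwa [← congrFun (Set.mem_singleton_iff.1 hω) 0]

/-- If `g` has constant modulus `1` and satisfies the cocycle equation
`g(σω) = c(ω₀)·g(ω)` a.e. over a fully supported Bernoulli base, then `g` is a.s. constant,
and consequently `c(i) = 1` for every symbol `i`. -/
theorem statement8 (q : ℕ) (hq : 2 ≤ q)
    (pvec : Fin q → ℝ) (hpos : ∀ i, 0 < pvec i) (hsum : ∑ i, pvec i = 1)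
    (μ : Measure (Word q)) (hBern : IsBernoulli pvec μ)
    (c : Fin q → ℂ) (hc : ∀ i, ‖c i‖ = 1)
    (g : Word q → ℂ) (hgmeas : Measurable g)
    (hgmod : ∀ᵐ ω ∂μ, ‖g ω‖ = 1)
    (hcocycle : ∀ᵐ ω ∂μ, g (shift ω) = c (ω 0) * g ω) :
    (∃ z : ℂ, ∀ᵐ ω ∂μ, g ω = z) ∧ ∀ i, c i = 1 :=
  statement8_general q pvec hpos μ hBern c hc g hgmeas hgmod hcocycle

end
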